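/- For p dividing m and r dividing m with r = gcd of m and some cycle data, the group G(m/r, m/r, n), viewed inside G(m,1,n) as matrices whose nonzero entries are (m/r)-th roots of unity with product 1, is generated by the set of permutation matrices (i.e., S_n) together with the single reflection [(1 2); r]. -/

import Mathlib

/-! Both sides are subgroups. The weight conditions are preserved by products and inverses, and
the generators satisfy them. Conversely, since every permutation lies in the closure `H`, an
element `[u; a]` lies in `H` exactly when the diagonal element `[1; a]` does, so it suffices to
show that the weight vectors `a` with `[1; a] ∈ H`, an additive group stable under permuting
coordinates, contain every `a` with entries in `rℤ/mℤ` and sum zero. Conjugating `[1; r e₁ - r e₂]`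
by permutations gives all `r eₖ - r e₂`, and `a = ∑ₖ aₖ (eₖ - e₂)` because `∑ₖ aₖ = 0`. -/

/-- The wreath product `(ℤ/mℤ) ≀ S_n`, i.e. the group `G(m, 1, n)`: an element is a pair
`[u; (a_1, ..., a_n)]` of a permutation `u ∈ S_n` and a weight vector in `(ℤ/mℤ)^n`. -/
structure WP (m n : ℕ) where
  perm : Equiv.Perm (Fin n)
  wt : Fin n → ZMod m

namespace WP

variable {m n : ℕ}

theorem ext' {g h : WP m n} (h1 : g.perm = h.perm) (h2 : ∀ i, g.wt i = h.wt i) : g = h := by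
  cases g; cases h
  simp only [mk.injEq]
  exact ⟨h1, funext h2⟩

instance : Mul (WP m n) :=
  ⟨fun g h => ⟨g.perm * h.perm, fun i => g.wt (h.perm i) + h.wt i⟩⟩

instance : One (WP m n) := ⟨⟨1, fun _ => 0⟩⟩

instance : Inv (WP m n) := ⟨fun g => ⟨g.perm⁻¹, fun i => -g.wt (g.perm⁻¹ i)⟩⟩

instance : Group (WP m n) where
  mul_assoc a b c := ext' (mul_assoc a.perm b.perm c.perm) (fun i => add_assoc _ _ _)
  one_mul a := ext' (one_mul a.perm) (fun i => zero_add _)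
  mul_one a := ext' (mul_one a.perm) (fun i => add_zero _)
  inv_mul_cancel a := ext' (inv_mul_cancel a.perm) (fun i => by
    show -a.wt (a.perm⁻¹ (a.perm i)) + a.wt i = 0
    simp)

end WP

theorem Pi.mem_of_forall_single_sub_single_mem {ι G : Type*} [Fintype ι] [DecidableEq ι]
    [AddCommGroup G] {A : AddSubgroup (ι → G)} {B : AddSubgroup G} (j : ι)
    (hA : ∀ i, ∀ b ∈ B, Pi.single i b - Pi.single j b ∈ A) {w : ι → G} (hw : ∀ i, w i ∈ B)
    (hsum : ∑ i, w i = 0) : w ∈ A := by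
  have hdecomp : w = ∑ i, (Pi.single i (w i) - Pi.single j (w i)) := by
    rw [Finset.sum_sub_distrib, Finset.univ_sum_single]
    ext k
    simp [Finset.sum_apply, Pi.single_apply, hsum]
  rw [hdecomp]
  exact A.sum_mem fun i _ => hA i (w i) (hw i)

namespace WP

variable {m n : ℕ}

@[simp] theorem mul_perm (a b : WP m n) : (a * b).perm = a.perm * b.perm := rfl
@[simp] theorem mul_wt (a b : WP m n) (i : Fin n) : (a * b).wt i = a.wt (b.perm i) + b.wt i := rfl
@[simp] theorem one_wt : (1 : WP m n).wt = 0 := rfl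
@[simp] theorem inv_perm (a : WP m n) : a⁻¹.perm = a.perm⁻¹ := rfl
@[simp] theorem inv_wt (a : WP m n) (i : Fin n) : a⁻¹.wt i = -a.wt (a.perm⁻¹ i) := rfl

def ofPerm (σ : Equiv.Perm (Fin n)) : WP m n := ⟨σ, 0⟩

def diag (w : Fin n → ZMod m) : WP m n := ⟨1, w⟩

theorem ofPerm_mul_diag (σ : Equiv.Perm (Fin n)) (w : Fin n → ZMod m) :
    ofPerm σ * diag w = ⟨σ, w⟩ :=
  ext' (mul_one σ) fun _ => zero_add _

theorem ofPerm_mul_diag_mul_inv (σ : Equiv.Perm (Fin n)) (w : Fin n → ZMod m) :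
    ofPerm σ * diag w * (ofPerm σ)⁻¹ = diag (w ∘ ⇑σ⁻¹) :=
  ext' (by simp [ofPerm, diag]) fun _ => by simp [ofPerm, diag]

def reflection (i j : Fin n) (a : ZMod m) : WP m n :=
  ⟨Equiv.swap i j, fun k => if k = i then a else if k = j then -a else 0⟩

theorem reflection_wt {i j : Fin n} (hij : i ≠ j) (a : ZMod m) :
    (reflection i j a).wt = Pi.single i a - Pi.single j a := by
  ext k
  by_cases hki : k = i <;> by_cases hkj : k = j <;> simp_all [reflection]

/-- For `B = rℤ/mℤ` this is `G(m/r, m/r, n)`. -/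
def weightSubgroup (B : AddSubgroup (ZMod m)) : Subgroup (WP m n) where
  carrier := {g | (∀ i, g.wt i ∈ B) ∧ ∑ i, g.wt i = 0}
  mul_mem' {x y} hx hy := by
    refine ⟨fun i => add_mem (hx.1 _) (hy.1 _), ?_⟩
    simp only [mul_wt, Finset.sum_add_distrib, Equiv.sum_comp y.perm x.wt, hx.2, hy.2, add_zero]
  one_mem' := ⟨fun _ => zero_mem B, by simp⟩
  inv_mem' {x} hx := by
    refine ⟨fun i => neg_mem (hx.1 _), ?_⟩
    simp only [inv_wt, Finset.sum_neg_distrib, Equiv.sum_comp x.perm⁻¹ x.wt, hx.2, neg_zero]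

theorem mem_weightSubgroup_of_wt_eq_zero {B : AddSubgroup (ZMod m)} {g : WP m n}
    (hg : g.wt = 0) : g ∈ weightSubgroup B :=
  ⟨fun _ => by simp [hg], by simp [hg]⟩

theorem reflection_mem_weightSubgroup {B : AddSubgroup (ZMod m)} {i j : Fin n} (hij : i ≠ j)
    {a : ZMod m} (ha : a ∈ B) : reflection i j a ∈ weightSubgroup B := by
  refine ⟨fun k => ?_, ?_⟩
  · simp only [reflection]
    split_ifs
    exacts [ha, neg_mem ha, zero_mem B]
  · simp [reflection_wt hij, Finset.sum_sub_distrib]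

def diagWeights (H : Subgroup (WP m n)) : AddSubgroup (Fin n → ZMod m) where
  carrier := {w | diag w ∈ H}
  add_mem' := H.mul_mem
  zero_mem' := H.one_mem
  neg_mem' := H.inv_mem

section PermsIn

variable {H : Subgroup (WP m n)} (hperm : ∀ σ, ofPerm σ ∈ H)
include hperm

theorem mem_iff_wt_mem_diagWeights (g : WP m n) : g ∈ H ↔ g.wt ∈ diagWeights H := by
  calc g ∈ H ↔ ofPerm g.perm * diag g.wt ∈ H := by rw [ofPerm_mul_diag]
    _ ↔ g.wt ∈ diagWeights H := H.mul_mem_cancel_left (hperm _)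

theorem comp_perm_mem_diagWeights (σ : Equiv.Perm (Fin n)) {w : Fin n → ZMod m}
    (hw : w ∈ diagWeights H) : w ∘ ⇑σ⁻¹ ∈ diagWeights H := by
  show diag (w ∘ ⇑σ⁻¹) ∈ H
  rw [← ofPerm_mul_diag_mul_inv]
  exact H.mul_mem (H.mul_mem (hperm σ) hw) (H.inv_mem (hperm σ))

theorem single_sub_single_mem_diagWeights {i j : Fin n} (hij : i ≠ j) {a : ZMod m}
    (hrefl : reflection i j a ∈ H) (k : Fin n) :
    Pi.single k a - Pi.single j a ∈ diagWeights H := by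
  rcases eq_or_ne k j with rfl | hkj
  · simp [(diagWeights H).zero_mem]
  have := comp_perm_mem_diagWeights hperm (Equiv.swap i k)
    ((mem_iff_wt_mem_diagWeights hperm _).1 hrefl)
  rwa [reflection_wt hij, Pi.sub_comp, Pi.single_comp_equiv, Pi.single_comp_equiv,
    Equiv.Perm.inv_def, Equiv.symm_symm, Equiv.swap_apply_left,
    Equiv.swap_apply_of_ne_of_ne hij.symm hkj.symm] at this

theorem weightSubgroup_zmultiples_le {i j : Fin n} (hij : i ≠ j) {a : ZMod m}
    (hrefl : reflection i j a ∈ H) : weightSubgroup (AddSubgroup.zmultiples a) ≤ H := by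
  intro g ⟨hwt, hsum⟩
  refine (mem_iff_wt_mem_diagWeights hperm g).2
    (Pi.mem_of_forall_single_sub_single_mem j (fun k b hb => ?_) hwt hsum)
  obtain ⟨c, rfl⟩ := AddSubgroup.mem_zmultiples_iff.1 hb
  rw [Pi.single_zsmul, Pi.single_zsmul, ← zsmul_sub]
  exact zsmul_mem (single_sub_single_mem_diagWeights hperm hij hrefl k) c

end PermsIn

end WP

open WP in
/-- Inside `G(m,1,n) = (ℤ/mℤ) ≀ S_n`, the subgroup `G(m/r, m/r, n)` (elements all of whose
weights lie in `rℤ/mℤ` and whose total weight is `0`) is generated by the permutation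
matrices (elements of weight zero) together with the single reflection `[(1 2); r]`. -/
theorem closure_perms_and_refl (m n r : ℕ) (hn : 2 ≤ n) :
    ∀ g : WP m n,
      g ∈ Subgroup.closure
        ({h : WP m n | h.wt = fun _ => 0} ∪
          {(⟨Equiv.swap ⟨0, by omega⟩ ⟨1, by omega⟩,
            fun i => if i = (⟨0, by omega⟩ : Fin n) then (r : ZMod m)
              else if i = (⟨1, by omega⟩ : Fin n) then -(r : ZMod m) else 0⟩ : WP m n)}) ↔
      ((∀ i : Fin n, g.wt i ∈ AddSubgroup.zmultiples ((r : ZMod m))) ∧ ∑ i, g.wt i = 0) := by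
  intro g
  let i₀ : Fin n := ⟨0, by omega⟩
  let i₁ : Fin n := ⟨1, by omega⟩
  have hne : i₀ ≠ i₁ := by simp [i₀, i₁, Fin.ext_iff]
  suffices Subgroup.closure ({h : WP m n | h.wt = 0} ∪ {reflection i₀ i₁ (r : ZMod m)}) =
      weightSubgroup (AddSubgroup.zmultiples (r : ZMod m)) from SetLike.ext_iff.1 this g
  refine le_antisymm ((Subgroup.closure_le _).2 (Set.union_subset ?_ ?_)) ?_
  · exact fun _ => mem_weightSubgroup_of_wt_eq_zero
  · exact Set.singleton_subset_iff.2
      (reflection_mem_weightSubgroup hne (AddSubgroup.mem_zmultiples _))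
  · exact weightSubgroup_zmultiples_le (fun σ => Subgroup.subset_closure (Or.inl rfl)) hne
      (Subgroup.subset_closure (Or.inr rfl))
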